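/- Let n ∈ ℕ^r be a multi-index near the diagonal, let A_1, …, A_r be real polynomials with deg A_j ≤ n_j − 1, and set F(x) = Σ_{j=1}^r A_j(x) w_j(x). If F satisfies the type I orthogonality conditions ∫₀¹ F(x) x^k dx = 0 for k = 0, 1, …, |n| − 2, then there exists a constant c ∈ ℝ such that for every real s > 1, ∫₀¹ F(x) x^{s−1} dx = c · (Γ(s+a)/Γ(s+b+n)) · (1−s)_{|n|−1}. -/

import Mathlib

open MeasureTheory Finset Polynomial

/-!
Expanding each `A j` in monomials turns the Mellin transform of `F` into a finite combination of
the values `Γ(s+k+a)/Γ(s+k+b+e_j)` of the transforms of the weights. Pulling out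
`Γ(s+a)/Γ(s+b+n)` by means of `Γ(x+m) = Γ(x) (x)_m` leaves a polynomial `Q(s)` (`typeIPoly`),
of degree at most `|n| - 1` because `n` is near the diagonal. The orthogonality conditions make
the transform vanish at `s = 1, …, |n| - 1` (at `s = 1` by continuity of the transform in `s`),
where the Gamma factor is positive; so these are `|n| - 1` roots of `Q`, which is therefore a
multiple of `(1-s)_{|n|-1}`.
-/

theorem Polynomial.exists_eq_C_mul_of_isRoot {K : Type*} [Field K] {P Q : K[X]} (s : Finset K)
    (hP0 : P ≠ 0) (hPdeg : P.natDegree ≤ #s) (hQdeg : Q.natDegree ≤ #s)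
    (hP : ∀ x ∈ s, P.IsRoot x) (hQ : ∀ x ∈ s, Q.IsRoot x) : ∃ c, Q = C c * P := by
  have hdiv : ∀ R : K[X], R.natDegree ≤ #s → (∀ x ∈ s, R.IsRoot x) →
      R = C R.leadingCoeff * ∏ x ∈ s, (X - C x) := fun R hdeg hR =>
    eq_leadingCoeff_mul_of_monic_of_dvd_of_natDegree_le
      (monic_prod_of_monic _ _ fun x _ => monic_X_sub_C x)
      (Finset.prod_dvd_of_coprime ((pairwise_coprime_X_sub_C Function.injective_id).set_pairwise _)
        fun x hx => dvd_iff_isRoot.mpr (hR x hx))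
      (by rwa [natDegree_finsetProd_X_sub_C_eq_card])
  have hlc : P.leadingCoeff ≠ 0 := leadingCoeff_ne_zero.mpr hP0
  refine ⟨Q.leadingCoeff / P.leadingCoeff, ?_⟩
  calc Q = C Q.leadingCoeff * ∏ x ∈ s, (X - C x) := hdiv Q hQdeg hQ
    _ = C (Q.leadingCoeff / P.leadingCoeff) * (C P.leadingCoeff * ∏ x ∈ s, (X - C x)) := by
      rw [← mul_assoc, ← C_mul, div_mul_cancel₀ _ hlc]
    _ = C (Q.leadingCoeff / P.leadingCoeff) * P := by rw [← hdiv P hPdeg hP]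

theorem exists_eval_eq_mul_ascPochhammer_one_sub {K : Type*} [Field K] [CharZero K] {Q : K[X]}
    {d : ℕ} (hdeg : Q.natDegree ≤ d) (hroots : ∀ m < d, Q.eval ((m : K) + 1) = 0) :
    ∃ c, ∀ s, Q.eval s = c * (ascPochhammer K d).eval (1 - s) := by
  set P : K[X] := (ascPochhammer K d).comp (1 - X)
  have hPeval : ∀ s, P.eval s = (ascPochhammer K d).eval (1 - s) := fun s => by simp [P]
  have hP0 : P ≠ 0 := fun hP => by
    simpa [hPeval, ascPochhammer_eval_one, Nat.factorial_ne_zero] using congrArg (eval 0) hP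
  have hPdeg : P.natDegree ≤ d := by
    refine natDegree_comp_le.trans ?_
    rw [ascPochhammer_natDegree]
    have h1X : (1 - X : K[X]).natDegree ≤ 1 := (natDegree_sub_le 1 X).trans (by simp)
    simpa using Nat.mul_le_mul_left d h1X
  let roots := (range d).map ⟨fun m : ℕ => (m : K) + 1, fun m m' h => by simpa using h⟩
  have hcard : #roots = d := by simp [roots]
  have hProots : ∀ x ∈ roots, P.IsRoot x := by
    simp only [roots, mem_map, mem_range]
    rintro _ ⟨m, hm, rfl⟩
    show P.IsRoot ((m : K) + 1)
    rw [IsRoot.def, hPeval, show (1 : K) - (m + 1) = -m by ring]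
    exact ascPochhammer_eval_neg_coe_nat_of_lt hm
  have hQroots : ∀ x ∈ roots, Q.IsRoot x := by
    simp only [roots, mem_map, mem_range]
    rintro _ ⟨m, hm, rfl⟩
    exact hroots m hm
  obtain ⟨c, hc⟩ := Polynomial.exists_eq_C_mul_of_isRoot roots hP0 (hcard ▸ hPdeg)
    (hcard ▸ hdeg) hProots hQroots
  exact ⟨c, fun s => by rw [hc, eval_mul, eval_C, hPeval]⟩

theorem Polynomial.eval_eq_sum_range_of_degree_lt {R : Type*} [CommSemiring R] {p : R[X]} {n : ℕ}
    (hp : p.degree < n) (x : R) : p.eval x = ∑ i ∈ range n, p.coeff i * x ^ i := by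
  rcases eq_or_ne p 0 with rfl | hp0
  · simp
  · exact eval_eq_sum_range' ((natDegree_lt_iff_degree_lt hp0).mpr hp) x

theorem Real.Gamma_add_nat_eq_mul_ascPochhammer {x : ℝ} (hx : 0 < x) (k : ℕ) :
    Real.Gamma (x + k) = Real.Gamma x * (ascPochhammer ℝ k).eval x := by
  induction k with
  | zero => simp
  | succ m ih =>
    rw [Nat.cast_succ, ← add_assoc, Real.Gamma_add_one (by positivity), ih,
      ascPochhammer_succ_eval]
    ring

theorem Real.continuousAt_Gamma_of_pos {x : ℝ} (hx : 0 < x) : ContinuousAt Real.Gamma x :=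
  (Real.differentiableAt_Gamma fun m => by
    linarith [(Nat.cast_nonneg m : (0 : ℝ) ≤ m)]).continuousAt

theorem prod_Gamma_div_prod_Gamma_eq {ι : Type*} [Fintype ι] {x y : ι → ℝ}
    (hx : ∀ i, 0 < x i) (hy : ∀ i, 0 < y i) (p q : ι → ℕ) :
    (∏ i, Real.Gamma (x i + p i)) / ∏ i, Real.Gamma (y i) =
      (∏ i, Real.Gamma (x i)) / (∏ i, Real.Gamma (y i + q i)) *
        ((∏ i, (ascPochhammer ℝ (p i)).eval (x i)) * ∏ i, (ascPochhammer ℝ (q i)).eval (y i)) := by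
  simp only [fun i => Real.Gamma_add_nat_eq_mul_ascPochhammer (hx i),
    fun i => Real.Gamma_add_nat_eq_mul_ascPochhammer (hy i), prod_mul_distrib]
  have hΓ : 0 < ∏ i, Real.Gamma (y i) := prod_pos fun i _ => Real.Gamma_pos_of_pos (hy i)
  have hP : 0 < ∏ i, (ascPochhammer ℝ (q i)).eval (y i) :=
    prod_pos fun i _ => ascPochhammer_pos _ _ (hy i)
  field_simp

theorem continuousOn_prod_Gamma_div_prod_Gamma {ι : Type*} [Fintype ι] {c d : ι → ℝ} {σ : ℝ}
    (hc : ∀ i, 0 < σ + c i) (hd : ∀ i, 0 < σ + d i) :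
    ContinuousOn (fun s => (∏ i, Real.Gamma (s + c i)) / ∏ i, Real.Gamma (s + d i))
      (Set.Ici σ) := by
  have hΓ : ∀ e : ι → ℝ, (∀ i, 0 < σ + e i) →
      ContinuousOn (fun s => ∏ i, Real.Gamma (s + e i)) (Set.Ici σ) := fun e he =>
    continuousOn_finsetProd _ fun i _ s hs =>
      ((Real.continuousAt_Gamma_of_pos (by linarith [he i, hs.out])).comp
        (continuous_add_const (e i)).continuousAt).continuousWithinAt
  exact (hΓ c hc).div (hΓ d hd) fun s hs =>
    prod_ne_zero_iff.mpr fun i _ => (Real.Gamma_pos_of_pos (by linarith [hd i, hs.out])).ne'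

section MellinIoo

variable {u : ℝ → ℝ} {σ s : ℝ}

theorem norm_rpow_mul_le {x : ℝ} (hx : x ∈ Set.Ioo 0 1) (hs : σ ≤ s) :
    ‖x ^ (s - 1) * u x‖ ≤ x ^ (σ - 1) * |u x| := by
  rw [Real.norm_eq_abs, abs_mul, abs_of_nonneg (Real.rpow_nonneg hx.1.le _)]
  exact mul_le_mul_of_nonneg_right
    (Real.rpow_le_rpow_of_exponent_ge hx.1 hx.2.le (by linarith)) (abs_nonneg _)

theorem aestronglyMeasurable_rpow_mul (hu : ContinuousOn u (Set.Ioo 0 1)) (s : ℝ) :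
    AEStronglyMeasurable (fun x => x ^ (s - 1) * u x) (volume.restrict (Set.Ioo 0 1)) :=
  ((ContinuousOn.rpow_const continuousOn_id fun _ hx => Or.inl hx.1.ne').mul hu)
    |>.aestronglyMeasurable measurableSet_Ioo

theorem integrableOn_rpow_mul (hu : ContinuousOn u (Set.Ioo 0 1))
    (hint : IntegrableOn (fun x => x ^ (σ - 1) * |u x|) (Set.Ioo 0 1)) (hs : σ ≤ s) :
    IntegrableOn (fun x => x ^ (s - 1) * u x) (Set.Ioo 0 1) :=
  hint.mono' (aestronglyMeasurable_rpow_mul hu s)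
    ((ae_restrict_mem measurableSet_Ioo).mono fun _ hx => norm_rpow_mul_le hx hs)

theorem continuousOn_setIntegral_rpow_mul (hu : ContinuousOn u (Set.Ioo 0 1))
    (hint : IntegrableOn (fun x => x ^ (σ - 1) * |u x|) (Set.Ioo 0 1)) :
    ContinuousOn (fun s => ∫ x in Set.Ioo 0 1, x ^ (s - 1) * u x) (Set.Ici σ) :=
  continuousOn_of_dominated (fun s _ => aestronglyMeasurable_rpow_mul hu s)
    (fun _ hs => (ae_restrict_mem measurableSet_Ioo).mono fun _ hx => norm_rpow_mul_le hx hs)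
    hint ((ae_restrict_mem measurableSet_Ioo).mono fun _ hx =>
      ((Real.continuous_const_rpow hx.1.ne').comp (continuous_sub_right 1)).continuousOn.mul
        continuousOn_const)

theorem setIntegral_rpow_mul_eq_of_le {g : ℝ → ℝ} (hu : ContinuousOn u (Set.Ioo 0 1))
    (hint : IntegrableOn (fun x => x ^ (σ - 1) * |u x|) (Set.Ioo 0 1))
    (hg : ContinuousOn g (Set.Ici σ))
    (h : ∀ s, σ < s → ∫ x in Set.Ioo 0 1, x ^ (s - 1) * u x = g s) (hs : σ ≤ s) :
    ∫ x in Set.Ioo 0 1, x ^ (s - 1) * u x = g s :=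
  Set.EqOn.of_subset_closure h (continuousOn_setIntegral_rpow_mul hu hint) hg
    Set.Ioi_subset_Ici_self (closure_Ioi σ).ge hs

end MellinIoo

theorem setIntegral_sum_eval_mul_rpow {ι : Type*} [Fintype ι] {w : ι → ℝ → ℝ} {A : ι → ℝ[X]}
    {n : ι → ℕ} {s : ℝ} (hA : ∀ j, (A j).degree < n j)
    (hw : ∀ j (k : ℕ), IntegrableOn (fun x => x ^ (s + k - 1) * w j x) (Set.Ioo 0 1)) :
    ∫ x in Set.Ioo 0 1, (∑ j, (A j).eval x * w j x) * x ^ (s - 1) =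
      ∑ j, ∑ k ∈ range (n j), (A j).coeff k * ∫ x in Set.Ioo 0 1, x ^ (s + k - 1) * w j x := by
  have hpoint : ∀ x ∈ Set.Ioo (0 : ℝ) 1, (∑ j, (A j).eval x * w j x) * x ^ (s - 1) =
      ∑ j, ∑ k ∈ range (n j), (A j).coeff k * (x ^ (s + k - 1) * w j x) := fun x hx => by
    simp only [sum_mul, eval_eq_sum_range_of_degree_lt (hA _)]
    refine sum_congr rfl fun j _ => sum_congr rfl fun k _ => ?_
    rw [show s + k - 1 = k + (s - 1) by ring, Real.rpow_add hx.1, Real.rpow_natCast]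
    ring
  rw [setIntegral_congr_fun measurableSet_Ioo hpoint,
    integral_finsetSum _ fun j _ => integrable_finsetSum _ fun k _ => (hw j k).const_mul _]
  refine sum_congr rfl fun j _ => ?_
  rw [integral_finsetSum _ fun k _ => (hw j k).const_mul _]
  exact sum_congr rfl fun k _ => integral_const_mul _ _

theorem Nat.add_ite_le_of_lt_of_abs_sub_le {ι : Type*} [DecidableEq ι] {n : ι → ℕ}
    (hn : ∀ i j, |(n i : ℤ) - n j| ≤ 1) {j : ι} {k : ℕ} (hk : k < n j) (i : ι) :
    k + (if i = j then 1 else 0) ≤ n i := by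
  have := (abs_le.mp (hn i j)).1
  split_ifs with hij
  · subst hij; omega
  · omega

section TypeI

variable {ι : Type*} [Fintype ι] [DecidableEq ι] (a b : ι → ℝ) (n : ι → ℕ)

noncomputable def typeIFactor (j : ι) (k : ℕ) : ℝ[X] :=
  (∏ i, (ascPochhammer ℝ k).comp (X + C (a i))) *
    ∏ i, (ascPochhammer ℝ (n i - (k + if i = j then 1 else 0))).comp
      (X + C (k + b i + if i = j then 1 else 0))

noncomputable def typeIPoly (A : ι → ℝ[X]) : ℝ[X] :=
  ∑ j, ∑ k ∈ range (n j), C ((A j).coeff k) * typeIFactor a b n j k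

variable {a b n}

theorem prod_Gamma_div_eq_mul_typeIFactor {j : ι} {k : ℕ}
    (hk : ∀ i, k + (if i = j then 1 else 0) ≤ n i) {s : ℝ}
    (ha : ∀ i, 0 < s + a i) (hb : ∀ i, 0 < s + b i) :
    (∏ i, Real.Gamma (s + k + a i)) / (∏ i, Real.Gamma (s + k + b i + if i = j then 1 else 0)) =
      (∏ i, Real.Gamma (s + a i)) / (∏ i, Real.Gamma (s + b i + n i)) *
        (typeIFactor a b n j k).eval s := by
  have hy : ∀ i, 0 < s + k + b i + if i = j then 1 else 0 := fun i => by
    have := hb i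
    have : (0 : ℝ) ≤ k := k.cast_nonneg
    split_ifs <;> linarith
  convert prod_Gamma_div_prod_Gamma_eq ha hy (fun _ => k)
    (fun i => n i - (k + if i = j then 1 else 0)) using 3
  · ring_nf
  · refine prod_congr rfl fun i _ => ?_
    rw [Nat.cast_sub (hk i)]
    push_cast
    ring_nf
  · simp only [typeIFactor, eval_mul, eval_prod, eval_comp, eval_add, eval_X, eval_C, add_assoc]

theorem natDegree_typeIFactor_le {j : ι} {k : ℕ}
    (hk : ∀ i, k + (if i = j then 1 else 0) ≤ n i) :
    (typeIFactor a b n j k).natDegree ≤ ∑ i, n i - 1 := by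
  have hcomp : ∀ (m : ℕ) (c : ℝ), ((ascPochhammer ℝ m).comp (X + C c)).natDegree = m := by
    simp [natDegree_comp]
  calc (typeIFactor a b n j k).natDegree
      ≤ ∑ i, k + ∑ i, (n i - (k + if i = j then 1 else 0)) :=
        natDegree_mul_le.trans (add_le_add
          ((natDegree_prod_le _ _).trans (sum_le_sum fun _ _ => (hcomp _ _).le))
          ((natDegree_prod_le _ _).trans (sum_le_sum fun _ _ => (hcomp _ _).le)))
    _ = ∑ i, (n i - if i = j then 1 else 0) := by
      rw [← sum_add_distrib]
      exact sum_congr rfl fun i _ => by have := hk i; omega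
    _ = ∑ i, n i - 1 := by
      rw [sum_tsub_distrib _ fun i _ => le_of_add_le_right (hk i)]
      simp

theorem natDegree_typeIPoly_le (hn : ∀ i j, |(n i : ℤ) - n j| ≤ 1) (A : ι → ℝ[X]) :
    (typeIPoly a b n A).natDegree ≤ ∑ i, n i - 1 :=
  natDegree_sum_le_of_forall_le _ _ fun _ _ => natDegree_sum_le_of_forall_le _ _ fun _ hk =>
    (natDegree_C_mul_le _ _).trans
      (natDegree_typeIFactor_le (Nat.add_ite_le_of_lt_of_abs_sub_le hn (mem_range.mp hk)))

theorem setIntegral_typeI_mul_rpow_eq (ha : ∀ i, -1 < a i) (hb : ∀ i, -1 < b i)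
    (hn : ∀ i j, |(n i : ℤ) - n j| ≤ 1) {w : ι → ℝ → ℝ}
    (hw_int : ∀ j, ∀ s : ℝ, 1 ≤ s → IntegrableOn (fun x => x ^ (s - 1) * w j x) (Set.Ioo 0 1))
    (hw_mellin : ∀ j, ∀ s : ℝ, 1 ≤ s →
      ∫ x in Set.Ioo (0 : ℝ) 1, x ^ (s - 1) * w j x =
        (∏ i, Real.Gamma (s + a i)) / (∏ i, Real.Gamma (s + b i + if i = j then 1 else 0)))
    {A : ι → ℝ[X]} (hA : ∀ j, (A j).degree < n j) {s : ℝ} (hs : 1 ≤ s) :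
    ∫ x in Set.Ioo 0 1, (∑ j, (A j).eval x * w j x) * x ^ (s - 1) =
      (∏ i, Real.Gamma (s + a i)) / (∏ i, Real.Gamma (s + b i + n i)) *
        (typeIPoly a b n A).eval s := by
  have hsk : ∀ k : ℕ, 1 ≤ s + k := fun k => le_add_of_le_of_nonneg hs k.cast_nonneg
  rw [setIntegral_sum_eval_mul_rpow hA fun j k => hw_int j _ (hsk k), typeIPoly, eval_finsetSum,
    mul_sum]
  refine sum_congr rfl fun j _ => ?_
  rw [eval_finsetSum, mul_sum]
  refine sum_congr rfl fun k hk => ?_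
  rw [hw_mellin j _ (hsk k), prod_Gamma_div_eq_mul_typeIFactor
    (Nat.add_ite_le_of_lt_of_abs_sub_le hn (mem_range.mp hk)) (fun i => by linarith [ha i])
    (fun i => by linarith [hb i]), eval_mul, eval_C]
  ring

end TypeI

theorem stmt_3_general
    (r : ℕ)
    (a b : Fin r → ℝ)
    (ha : ∀ i, -1 < a i) (hb : ∀ i, -1 < b i)
    (w : Fin r → ℝ → ℝ)
    (hw_cont : ∀ j, ContinuousOn (w j) (Set.Ioo 0 1))
    (hw_int : ∀ j, ∀ σ : ℝ, 0 < σ →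
      IntegrableOn (fun x : ℝ => x ^ (σ - 1) * |w j x|) (Set.Ioo 0 1))
    (hw_mellin : ∀ j, ∀ s : ℝ, 1 < s →
      ∫ x in Set.Ioo (0:ℝ) 1, x ^ (s - 1) * w j x
        = (∏ i, Real.Gamma (s + a i)) /
          (∏ i, Real.Gamma (s + b i + if i = j then 1 else 0)))
    (n : Fin r → ℕ)
    (hn : ∀ i j, |(n i : ℤ) - (n j : ℤ)| ≤ 1)
    (A : Fin r → Polynomial ℝ)
    (hA : ∀ j, (A j).degree < (n j : WithBot ℕ))
    (horth : ∀ k : ℕ, k + 2 ≤ ∑ j, n j →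
      ∫ x in Set.Ioo (0:ℝ) 1, (∑ j, (A j).eval x * w j x) * x ^ (k : ℕ) = 0) :
    ∃ c : ℝ, ∀ s : ℝ, 1 < s →
      ∫ x in Set.Ioo (0:ℝ) 1, (∑ j, (A j).eval x * w j x) * x ^ (s - 1)
        = c * ((∏ i, Real.Gamma (s + a i)) / (∏ i, Real.Gamma (s + b i + n i))) *
            (ascPochhammer ℝ (∑ j, n j - 1)).eval (1 - s) := by
  have hw_int_one := fun j => hw_int j 1 one_pos
  have hratio : ∀ j, ContinuousOn (fun s : ℝ => (∏ i, Real.Gamma (s + a i)) /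
      (∏ i, Real.Gamma (s + b i + if i = j then 1 else 0))) (Set.Ici 1) := fun j => by
    have hd : ∀ i, 0 < 1 + (b i + if i = j then 1 else 0) := fun i => by
      have := hb i; split_ifs <;> linarith
    simpa only [add_assoc] using
      continuousOn_prod_Gamma_div_prod_Gamma (fun i => by linarith [ha i]) hd
  have hw_mellin_one := fun j s (hs : 1 ≤ s) =>
    setIntegral_rpow_mul_eq_of_le (hw_cont j) (hw_int_one j) (hratio j) (hw_mellin j) hs
  have hF : ∀ s : ℝ, 1 ≤ s → _ := fun s => setIntegral_typeI_mul_rpow_eq ha hb hn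
    (fun j _ hs => integrableOn_rpow_mul (hw_cont j) (hw_int_one j) hs) hw_mellin_one hA (s := s)
  have hroots : ∀ m < ∑ j, n j - 1, (typeIPoly a b n A).eval ((m : ℝ) + 1) = 0 := by
    intro m hm
    have h := hF (m + 1) (by simp)
    simp only [add_sub_cancel_right, Real.rpow_natCast, horth m (by omega)] at h
    have hR : (∏ i, Real.Gamma (m + 1 + a i)) / (∏ i, Real.Gamma (m + 1 + b i + n i)) ≠ 0 :=
      div_ne_zero (prod_ne_zero_iff.mpr fun i _ => (Real.Gamma_pos_of_pos (by linarith [ha i])).ne')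
        (prod_ne_zero_iff.mpr fun i _ => (Real.Gamma_pos_of_pos (by linarith [hb i])).ne')
    exact (mul_eq_zero.mp h.symm).resolve_left hR
  obtain ⟨c, hc⟩ := exists_eval_eq_mul_ascPochhammer_one_sub (natDegree_typeIPoly_le hn A) hroots
  exact ⟨c, fun s hs => by rw [hF s hs.le, hc]; ring⟩

/-- In the Jacobi-like setting, the Mellin transform of a type I function
(a polynomial combination of the weights satisfying the type I orthogonality conditions)
equals `c · Γ(s+a)/Γ(s+b+n) · (1-s)_{|n|-1}` for some constant `c`. -/
theorem stmt_3
    (r : ℕ) (hr : 1 ≤ r)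
    (a b : Fin r → ℝ)
    (ha : ∀ i, -1 < a i) (hb : ∀ i, -1 < b i) (hab : ∀ i, a i < b i)
    (w : Fin r → ℝ → ℝ)
    (hw_cont : ∀ j, ContinuousOn (w j) (Set.Ioo 0 1))
    (hw_int : ∀ j, ∀ σ : ℝ, 0 < σ →
      IntegrableOn (fun x : ℝ => x ^ (σ - 1) * |w j x|) (Set.Ioo 0 1))
    (hw_mellin : ∀ j, ∀ s : ℝ, 1 < s →
      ∫ x in Set.Ioo (0:ℝ) 1, x ^ (s - 1) * w j x
        = (∏ i, Real.Gamma (s + a i)) /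
          (∏ i, Real.Gamma (s + b i + if i = j then 1 else 0)))
    (n : Fin r → ℕ)
    (hn : ∀ i j, |(n i : ℤ) - (n j : ℤ)| ≤ 1)
    (A : Fin r → Polynomial ℝ)
    (hA : ∀ j, (A j).degree < (n j : WithBot ℕ))
    (horth : ∀ k : ℕ, k + 2 ≤ ∑ j, n j →
      ∫ x in Set.Ioo (0:ℝ) 1, (∑ j, (A j).eval x * w j x) * x ^ (k : ℕ) = 0) :
    ∃ c : ℝ, ∀ s : ℝ, 1 < s →
      ∫ x in Set.Ioo (0:ℝ) 1, (∑ j, (A j).eval x * w j x) * x ^ (s - 1)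
        = c * ((∏ i, Real.Gamma (s + a i)) / (∏ i, Real.Gamma (s + b i + n i))) *
            (ascPochhammer ℝ (∑ j, n j - 1)).eval (1 - s) :=
  stmt_3_general r a b ha hb w hw_cont hw_int hw_mellin n hn A hA horth
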